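/- arXiv:1202.1987 — 4 statements merged into one kernel-verified Lean document; each statement's English description precedes it below -/
import Mathlib

section
/- Two-level uniform bound: let A be SPD on finite-dimensional V, let V_c ⊆ V be a subspace with A-orthogonal projection P, and let S : V → V be a linear smoother. Assume the approximation-smoothing estimate ‖(I − P)(S v)‖²_A ≤ η(‖v‖²_A − ‖S v‖²_A) for all v ∈ V, with η > 0. Suppose the coarse correction map C : V_c → V_c satisfies ‖v_c − C(v_c)‖²_A ≤ δ‖v_c‖²_A for all v_c ∈ V_c, where δ = η/(1+η). Then the composite error map E(v) = (S v − P(S v)) + (P(S v) − C(P(S v))) satisfies ‖E(v)‖²_A ≤ δ‖v‖²_A for all v ∈ V. -/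
open RealInnerProductSpace

/-! Both `E v` and `S v` split `A`-orthogonally: `E v` into the fine error `(I - P) S v` and the
coarse error of `P S v ∈ Vc`, and `S v` into `(I - P) S v` and `P S v`. With `a`, `b`, `c` the
squared `A`-norms of `(I - P) S v`, `P S v` and that coarse error, the hypotheses give
`(1 + η) a ≤ η (‖v‖²_A - a - b)` and `(1 + η) c ≤ η b`; adding them, `(1 + η) (a + c) ≤ η ‖v‖²_A`. -/

theorem LinearMap.IsSymmetric.inner_map_add_eq_of_inner_map_eq_zero
    {V : Type*} [NormedAddCommGroup V] [InnerProductSpace ℝ V]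
    {A : V →ₗ[ℝ] V} (hA : A.IsSymmetric) {x y : V} (hxy : ⟪A x, y⟫ = 0) :
    ⟪A (x + y), x + y⟫ = ⟪A x, x⟫ + ⟪A y, y⟫ := by
  have hyx : ⟪A y, x⟫ = 0 := by rw [hA, real_inner_comm, hxy]
  simp only [map_add, inner_add_left, inner_add_right, hxy, hyx]
  ring

theorem add_le_div_one_add_mul_of_le {η a b c s t : ℝ} (hη : 0 < η) (ht : t = a + b)
    (ha : a ≤ η * (s - t)) (hc : c ≤ η / (1 + η) * b) :
    a + c ≤ η / (1 + η) * s := by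
  have hη1 : 0 < 1 + η := by linarith
  rw [div_mul_eq_mul_div, le_div_iff₀ hη1] at hc ⊢
  subst ht
  nlinarith

theorem amli_two_level_uniform_bound_general
    {V : Type*} [NormedAddCommGroup V] [InnerProductSpace ℝ V]
    (A : V →ₗ[ℝ] V)
    (hA_sym : ∀ x y : V, ⟪A x, y⟫ = ⟪x, A y⟫)
    (Vc : Submodule ℝ V) (P : V → V)
    (hP_mem : ∀ v : V, P v ∈ Vc)
    (hP_orth : ∀ v : V, ∀ wc ∈ Vc, ⟪A (v - P v), wc⟫ = 0)
    (S : V →ₗ[ℝ] V) (η : ℝ) (hη : 0 < η)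
    (happrox : ∀ v : V, ⟪A (S v - P (S v)), S v - P (S v)⟫ ≤
      η * (⟪A v, v⟫ - ⟪A (S v), S v⟫))
    (C : V → V) (hC_mem : ∀ vc ∈ Vc, C vc ∈ Vc)
    (δ : ℝ) (hδ : δ = η / (1 + η))
    (hC : ∀ vc ∈ Vc, ⟪A (vc - C vc), vc - C vc⟫ ≤ δ * ⟪A vc, vc⟫)
    (E : V → V)
    (hE : ∀ v : V, E v = (S v - P (S v)) + (P (S v) - C (P (S v)))) :
    ∀ v : V, ⟪A (E v), E v⟫ ≤ δ * ⟪A v, v⟫ := by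
  have hA : A.IsSymmetric := hA_sym
  intro v
  have hPSv := hP_mem (S v)
  have hcoarse_mem : P (S v) - C (P (S v)) ∈ Vc := Vc.sub_mem hPSv (hC_mem _ hPSv)
  have hSv_split : ⟪A (S v), S v⟫ =
      ⟪A (S v - P (S v)), S v - P (S v)⟫ + ⟪A (P (S v)), P (S v)⟫ := by
    simpa using hA.inner_map_add_eq_of_inner_map_eq_zero (hP_orth (S v) _ hPSv)
  rw [hE v, hA.inner_map_add_eq_of_inner_map_eq_zero (hP_orth (S v) _ hcoarse_mem), hδ]
  exact add_le_div_one_add_mul_of_le hη hSv_split (happrox v) (hδ ▸ hC _ hPSv)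

theorem amli_two_level_uniform_bound
    {V : Type*} [NormedAddCommGroup V] [InnerProductSpace ℝ V] [FiniteDimensional ℝ V]
    (A : V →ₗ[ℝ] V)
    (hA_sym : ∀ x y : V, ⟪A x, y⟫ = ⟪x, A y⟫)
    (hA_pos : ∀ x : V, x ≠ 0 → 0 < ⟪A x, x⟫)
    (Vc : Submodule ℝ V) (P : V → V)
    (hP_mem : ∀ v : V, P v ∈ Vc)
    (hP_orth : ∀ v : V, ∀ wc ∈ Vc, ⟪A (v - P v), wc⟫ = 0)
    (S : V →ₗ[ℝ] V) (η : ℝ) (hη : 0 < η)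
    (happrox : ∀ v : V, ⟪A (S v - P (S v)), S v - P (S v)⟫ ≤
      η * (⟪A v, v⟫ - ⟪A (S v), S v⟫))
    (C : V → V) (hC_mem : ∀ vc ∈ Vc, C vc ∈ Vc)
    (δ : ℝ) (hδ : δ = η / (1 + η))
    (hC : ∀ vc ∈ Vc, ⟪A (vc - C vc), vc - C vc⟫ ≤ δ * ⟪A vc, vc⟫)
    (E : V → V)
    (hE : ∀ v : V, E v = (S v - P (S v)) + (P (S v) - C (P (S v)))) :
    ∀ v : V, ⟪A (E v), E v⟫ ≤ δ * ⟪A v, v⟫ :=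
  amli_two_level_uniform_bound_general A hA_sym Vc P hP_mem hP_orth S η hη happrox C hC_mem δ hδ hC
    E hE
end

section
/- Let δ̄ ∈ [0,1) and let n be a positive integer with n > 1/(1−δ̄). Then there exists δ ∈ [0,1) such that (1−δⁿ)·δ̄ + δⁿ ≤ δ. -/
/-!
The witness is `δ = δ̄ + 1/n`. With it the fixed-point inequality is equivalent to
`δⁿ · n(1 - δ̄) ≤ 1`, and `n(1 - δ̄) = 1 + n(1 - δ)`. Bernoulli's inequality gives
`1 + n(1 - δ) ≤ (2 - δ)ⁿ`, while `δ(2 - δ) = 1 - (1 - δ)² ≤ 1`.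
-/

theorem pow_mul_one_add_mul_one_sub_le_one {d : ℝ} (hd₀ : 0 ≤ d) (hd₂ : d ≤ 2) (n : ℕ) :
    d ^ n * (1 + n * (1 - d)) ≤ 1 :=
  calc d ^ n * (1 + n * (1 - d))
      ≤ d ^ n * (1 + (1 - d)) ^ n :=
        mul_le_mul_of_nonneg_left (one_add_mul_le_pow (by linarith) n) (pow_nonneg hd₀ n)
    _ = (d * (2 - d)) ^ n := by rw [mul_pow]; ring_nf
    _ ≤ 1 := pow_le_one₀ (by nlinarith) (by nlinarith [sq_nonneg (1 - d)])

theorem amli_exists_fixed_point_delta_general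
    (δbar : ℝ) (hδbar0 : 0 ≤ δbar) (hδbar1 : δbar < 1)
    (n : ℕ) (hn_large : (1 : ℝ) / (1 - δbar) < n) :
    ∃ δ : ℝ, 0 ≤ δ ∧ δ < 1 ∧ (1 - δ ^ n) * δbar + δ ^ n ≤ δ := by
  have hgap : 0 < 1 - δbar := sub_pos.mpr hδbar1
  have hn : (0 : ℝ) < n := lt_trans (by positivity) hn_large
  have hinv_lt : 1 / (n : ℝ) < 1 - δbar := (one_div_lt hgap hn).mp hn_large
  have hδ_lt : δbar + 1 / n < 1 := by linarith
  have hδ_nonneg : 0 ≤ δbar + 1 / n := by positivity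
  refine ⟨δbar + 1 / n, hδ_nonneg, hδ_lt, ?_⟩
  have hbernoulli := pow_mul_one_add_mul_one_sub_le_one hδ_nonneg (by linarith) n
  have hcancel : (n : ℝ) * (1 / n) = 1 := mul_one_div_cancel hn.ne'
  have hpow : (δbar + 1 / n) ^ n * (1 - δbar) ≤ 1 / n := by
    rw [le_div_iff₀ hn]
    linear_combination hbernoulli + (δbar + 1 / n) ^ n * hcancel
  linarith

theorem amli_exists_fixed_point_delta
    (δbar : ℝ) (hδbar0 : 0 ≤ δbar) (hδbar1 : δbar < 1)
    (n : ℕ) (hn : 0 < n) (hn_large : (1 : ℝ) / (1 - δbar) < n) :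
    ∃ δ : ℝ, 0 ≤ δ ∧ δ < 1 ∧ (1 - δ ^ n) * δbar + δ ^ n ≤ δ :=
  amli_exists_fixed_point_delta_general δbar hδbar0 hδbar1 n hn_large
end

section
/- Define φ(δ) = (1 + δ + δ² + ⋯ + δ^{n−1})·δ̄ − (δ + δ² + ⋯ + δ^{n−1}) for δ̄ ∈ (0,1) and integer n ≥ 2 with n(1−δ̄) > 1. Then φ(0) > 0, φ(1) < 0, and consequently there exists δ* ∈ (0,1) with φ(δ*) = 0; moreover every δ ∈ [δ*, 1) satisfies (1−δⁿ)δ̄ + δⁿ ≤ δ. -/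
/-!
Since `∑_{1 ≤ j < n} δ^j = ∑_{j < n} δ^j - 1`, the polynomial is `φ δ = 1 - (1 - δ̄) ∑_{j < n} δ^j`.
It equals `δ̄` at `0` and `1 - n (1 - δ̄) < 0` at `1`, so the intermediate value theorem gives a
root `δ*`, and `φ` is antitone on `[0, ∞)`, so `φ ≤ 0` on `[δ*, 1)`. Finally the geometric sum
formula gives `(1 - δ) φ δ = (1 - δⁿ) δ̄ + δⁿ - δ`.
-/

open Finset

noncomputable def amliPhi (δbar : ℝ) (n : ℕ) (δ : ℝ) : ℝ :=
  1 - (1 - δbar) * ∑ j ∈ range n, δ ^ j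

namespace amliPhi

variable {δbar : ℝ} {n : ℕ}

theorem eq_sum_range_sub_sum_Ico (hn : 0 < n) (δ : ℝ) :
    amliPhi δbar n δ = (∑ j ∈ range n, δ ^ j) * δbar - ∑ j ∈ Ico 1 n, δ ^ j := by
  rw [amliPhi, range_eq_Ico, sum_eq_sum_Ico_succ_bot hn, pow_zero]
  ring

theorem apply_zero (hn : 0 < n) : amliPhi δbar n 0 = δbar := by
  simp [amliPhi, zero_pow_eq, hn]

theorem apply_one : amliPhi δbar n 1 = 1 - n * (1 - δbar) := by
  simp [amliPhi, mul_comm]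

theorem continuous : Continuous (amliPhi δbar n) := by
  unfold amliPhi
  fun_prop

theorem antitoneOn (hδbar : δbar ≤ 1) : AntitoneOn (amliPhi δbar n) (Set.Ici 0) := by
  intro a ha b _ hab
  have hsum : ∑ j ∈ range n, a ^ j ≤ ∑ j ∈ range n, b ^ j :=
    sum_le_sum fun j _ => pow_le_pow_left₀ ha hab j
  unfold amliPhi
  nlinarith

theorem one_sub_mul (δ : ℝ) :
    (1 - δ) * amliPhi δbar n δ = (1 - δ ^ n) * δbar + δ ^ n - δ := by
  have hgeom := geom_sum_mul δ n
  unfold amliPhi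
  linear_combination (1 - δbar) * hgeom

theorem le_self_of_nonpos {δ : ℝ} (hδ : δ < 1) (hφ : amliPhi δbar n δ ≤ 0) :
    (1 - δ ^ n) * δbar + δ ^ n ≤ δ := by
  have := one_sub_mul (δbar := δbar) (n := n) δ
  nlinarith [mul_nonpos_of_nonneg_of_nonpos (sub_nonneg.2 hδ.le) hφ]

end amliPhi

theorem amli_phi_root_and_fixed_point_general
    (δbar : ℝ) (hδbar0 : 0 < δbar)
    (n : ℕ) (hn_large : 1 < (n : ℝ) * (1 - δbar))
    (φ : ℝ → ℝ)
    (hφ : ∀ δ : ℝ, φ δ =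
      (∑ j ∈ Finset.range n, δ ^ j) * δbar - ∑ j ∈ Finset.Ico 1 n, δ ^ j) :
    0 < φ 0 ∧ φ 1 < 0 ∧
      ∃ δstar : ℝ, 0 < δstar ∧ δstar < 1 ∧ φ δstar = 0 ∧
        ∀ δ : ℝ, δstar ≤ δ → δ < 1 → (1 - δ ^ n) * δbar + δ ^ n ≤ δ := by
  have hn : 0 < n := by
    rcases n with _ | n
    · norm_num at hn_large
    · exact n.succ_pos
  have hδbar1 : δbar < 1 := sub_pos.1 (pos_of_mul_pos_right (one_pos.trans hn_large) n.cast_nonneg)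
  obtain rfl : φ = amliPhi δbar n :=
    funext fun δ => (hφ δ).trans (amliPhi.eq_sum_range_sub_sum_Ico hn δ).symm
  have h0 : 0 < amliPhi δbar n 0 := amliPhi.apply_zero hn ▸ hδbar0
  have h1 : amliPhi δbar n 1 < 0 := by rw [amliPhi.apply_one]; linarith
  obtain ⟨δstar, ⟨hpos, hlt⟩, hroot⟩ :=
    intermediate_value_Ioo' zero_le_one amliPhi.continuous.continuousOn ⟨h1, h0⟩
  refine ⟨h0, h1, δstar, hpos, hlt, hroot, fun δ hle hδ => amliPhi.le_self_of_nonpos hδ ?_⟩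
  exact hroot ▸ amliPhi.antitoneOn hδbar1.le hpos.le (hpos.le.trans hle) hle

theorem amli_phi_root_and_fixed_point
    (δbar : ℝ) (hδbar0 : 0 < δbar) (hδbar1 : δbar < 1)
    (n : ℕ) (hn : 2 ≤ n) (hn_large : 1 < (n : ℝ) * (1 - δbar))
    (φ : ℝ → ℝ)
    (hφ : ∀ δ : ℝ, φ δ =
      (∑ j ∈ Finset.range n, δ ^ j) * δbar - ∑ j ∈ Finset.Ico 1 n, δ ^ j) :
    0 < φ 0 ∧ φ 1 < 0 ∧
      ∃ δstar : ℝ, 0 < δstar ∧ δstar < 1 ∧ φ δstar = 0 ∧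
        ∀ δ : ℝ, δstar ≤ δ → δ < 1 → (1 - δ ^ n) * δbar + δ ^ n ≤ δ :=
  amli_phi_root_and_fixed_point_general δbar hδbar0 n hn_large φ hφ
end

section
/- Let A be SPD on finite-dimensional V, V_c a subspace with A-orthogonal projection P, S : V → V linear, and η > 0 with ‖S v − P(S v)‖²_A ≤ η(‖v‖²_A − ‖S v‖²_A) for all v, and ‖S v‖_A ≤ ‖v‖_A. Set ρ² = η/(1+η). Then for all w ∈ V: ‖S w − P(S w)‖²_A + ρ² ‖P(S w)‖²_A ≤ ρ² ‖w‖²_A. -/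
open RealInnerProductSpace

theorem inner_map_add_add_eq_of_inner_map_eq_zero {V : Type*} [NormedAddCommGroup V]
    [InnerProductSpace ℝ V] (A : V →ₗ[ℝ] V) (hA : ∀ x y : V, ⟪A x, y⟫ = ⟪x, A y⟫) {e p : V}
    (horth : ⟪A e, p⟫ = 0) :
    ⟪A (e + p), e + p⟫ = ⟪A e, e⟫ + ⟪A p, p⟫ := by
  have horth' : ⟪A p, e⟫ = 0 := by rw [hA, real_inner_comm, horth]
  simp only [map_add, inner_add_left, inner_add_right, horth, horth']
  ring

/-- Dividing `a + η a + η b ≤ η c` by `1 + η`. -/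
theorem add_div_one_add_mul_le_of_le_mul_sub {a b c η : ℝ} (hη : 0 < η)
    (h : a ≤ η * (c - (a + b))) :
    a + η / (1 + η) * b ≤ η / (1 + η) * c := by
  have h1η : 0 < 1 + η := by linarith
  rw [← mul_le_mul_iff_right₀ h1η]
  field_simp
  linarith

theorem amli_strict_comparison_final_bound_general
    {V : Type*} [NormedAddCommGroup V] [InnerProductSpace ℝ V]
    (A : V →ₗ[ℝ] V)
    (hA_sym : ∀ x y : V, ⟪A x, y⟫ = ⟪x, A y⟫)
    (Vc : Submodule ℝ V) (P : V → V)
    (hP_mem : ∀ v : V, P v ∈ Vc)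
    (hP_orth : ∀ v : V, ∀ wc ∈ Vc, ⟪A (v - P v), wc⟫ = 0)
    (S : V →ₗ[ℝ] V) (η : ℝ) (hη : 0 < η)
    (happrox : ∀ v : V, ⟪A (S v - P (S v)), S v - P (S v)⟫ ≤
      η * (⟪A v, v⟫ - ⟪A (S v), S v⟫))
    (ρsq : ℝ) (hρ : ρsq = η / (1 + η)) :
    ∀ w : V,
      ⟪A (S w - P (S w)), S w - P (S w)⟫ + ρsq * ⟪A (P (S w)), P (S w)⟫ ≤
        ρsq * ⟪A w, w⟫ := by
  intro w
  have hpyth := inner_map_add_add_eq_of_inner_map_eq_zero A hA_sym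
    (hP_orth (S w) _ (hP_mem (S w)))
  rw [sub_add_cancel] at hpyth
  have hbound := happrox w
  rw [hpyth] at hbound
  subst hρ
  exact add_div_one_add_mul_le_of_le_mul_sub hη hbound

theorem amli_strict_comparison_final_bound
    {V : Type*} [NormedAddCommGroup V] [InnerProductSpace ℝ V] [FiniteDimensional ℝ V]
    (A : V →ₗ[ℝ] V)
    (hA_sym : ∀ x y : V, ⟪A x, y⟫ = ⟪x, A y⟫)
    (hA_pos : ∀ x : V, x ≠ 0 → 0 < ⟪A x, x⟫)
    (Vc : Submodule ℝ V) (P : V → V)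
    (hP_mem : ∀ v : V, P v ∈ Vc)
    (hP_orth : ∀ v : V, ∀ wc ∈ Vc, ⟪A (v - P v), wc⟫ = 0)
    (S : V →ₗ[ℝ] V) (η : ℝ) (hη : 0 < η)
    (happrox : ∀ v : V, ⟪A (S v - P (S v)), S v - P (S v)⟫ ≤
      η * (⟪A v, v⟫ - ⟪A (S v), S v⟫))
    (hS : ∀ v : V, Real.sqrt ⟪A (S v), S v⟫ ≤ Real.sqrt ⟪A v, v⟫)
    (ρsq : ℝ) (hρ : ρsq = η / (1 + η)) :
    ∀ w : V,
      ⟪A (S w - P (S w)), S w - P (S w)⟫ + ρsq * ⟪A (P (S w)), P (S w)⟫ ≤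
        ρsq * ⟪A w, w⟫ :=
  amli_strict_comparison_final_bound_general A hA_sym Vc P hP_mem hP_orth S η hη happrox ρsq hρ
end
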